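/- For every K_n, every spline degree p, and every index set α ⊆ {1,…,K_n+p−2}, all eigenvalues of Ξ_αF_αF_αᵀ are positive reals and 1/3 ≤ λ_min(Ξ_αF_αF_αᵀ) ≤ λ_max(Ξ_αF_αF_αᵀ) ≤ 1. -/

import Mathlib

open Matrix

noncomputable section

/-- The free (breakpoint) coordinates determined by the active set `α`: coordinate `t` is free
iff it is not the middle coordinate of an active second-difference constraint. -/
def freeSet (m : ℕ) (α : Finset (Fin (m - 2))) : Finset (Fin m) :=
  Finset.univ.filter fun t => ∀ i ∈ α, t.val ≠ i.val + 1

/-- The `j`-th free coordinate, in increasing order (`= m` out of range). -/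
def freeIdx (m : ℕ) (α : Finset (Fin (m - 2))) (j : ℕ) : ℕ :=
  if h : j < (freeSet m α).card then (((freeSet m α).orderIsoOfFin rfl) ⟨j, h⟩).1.1 else m

/-- The interpolation matrix `F_α ∈ ℝ^{ℓ×m}`, `ℓ = m - |α|`: its `j`-th row is the
piecewise-linear hat function on the grid of free coordinates which equals `1` at the `j`-th
free coordinate and `0` at all other free coordinates, so that `b = F_αᵀ b̃` recovers a vector
satisfying the active constraints from its free values `b̃`. -/
def Fmat (m : ℕ) (α : Finset (Fin (m - 2))) : Matrix (Fin (freeSet m α).card) (Fin m) ℝ :=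
  fun j t =>
    if t.val = freeIdx m α j.val then 1
    else if freeIdx m α j.val < t.val ∧ t.val < freeIdx m α (j.val + 1) then
      ((freeIdx m α (j.val + 1) : ℝ) - (t.val : ℝ)) /
        ((freeIdx m α (j.val + 1) : ℝ) - (freeIdx m α j.val : ℝ))
    else if 0 < j.val ∧ freeIdx m α (j.val - 1) < t.val ∧ t.val < freeIdx m α j.val then
      ((t.val : ℝ) - (freeIdx m α (j.val - 1) : ℝ)) /
        ((freeIdx m α j.val : ℝ) - (freeIdx m α (j.val - 1) : ℝ))
    else 0

/-- The row sums `η_j` of `F_α`. -/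
def etaRow (m : ℕ) (α : Finset (Fin (m - 2))) (j : Fin (freeSet m α).card) : ℝ :=
  ∑ t : Fin m, Fmat m α j t

/-- The diagonal matrix `Ξ_α = diag(η₁⁻¹,…,η_ℓ⁻¹)`. -/
def XiMat (m : ℕ) (α : Finset (Fin (m - 2))) :
    Matrix (Fin (freeSet m α).card) (Fin (freeSet m α).card) ℝ :=
  Matrix.diagonal fun j => (etaRow m α j)⁻¹

/-! Write `G = F_α F_αᵀ`. Since `Ξ_α` is a positive diagonal matrix, `Ξ_α G` is similar to the
symmetric matrix `Ξ_α^{1/2} G Ξ_α^{1/2}`, so its eigenvalues are real, and each of them is a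
generalized Rayleigh quotient `xᵀGx / Σ η_j x_j²` of a real eigenvector. The columns of `F_α` are
barycentric weights (the hat functions form a partition of unity), so `G` is a nonnegative
symmetric matrix whose row sums are the `η_j`. For such a matrix, expanding
`Σ G_jk (x_j ∓ x_k)² ≥ 0` gives `Σ (2 G_jj - η_j) x_j² ≤ xᵀGx ≤ Σ η_j x_j²`, so the lower bound
`1/3` reduces to `3 Σ_t F_jt² ≥ 2 Σ_t F_jt` for each hat function: its peak contributes `1` to
`Σ_t F_jt (3 F_jt - 2)` and each of its two linear ramps at least `-1/2`. -/

open Finset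

theorem sum_range_affine_mul_three_mul_sub_two (p q : ℝ) (n : ℕ) :
    ∑ i ∈ range n, (p + q * i) * (3 * (p + q * i) - 2)
      = n * p * (3 * p - 2) + q * (3 * p - 1) * (n * (n - 1))
        + q ^ 2 * (n * (n - 1) * (2 * n - 1) / 2) := by
  induction n with
  | zero => simp
  | succ n ih =>
    rw [sum_range_succ, ih]
    push_cast
    ring

theorem sum_Ioo_eq_sum_range (a n : ℕ) (g : ℕ → ℝ) :
    ∑ t ∈ Ioo a (a + n + 1), g t = ∑ i ∈ range n, g (a + 1 + i) := by
  rw [← Ico_add_one_left_eq_Ioo, sum_Ico_eq_sum_range, show a + n + 1 - (a + 1) = n by omega]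

theorem neg_half_le_sum_Ioo_ramp_up (a b : ℕ) :
    -(1 / 2) ≤ ∑ t ∈ Ioo a b,
      ((t : ℝ) - a) / ((b : ℝ) - a) * (3 * (((t : ℝ) - a) / ((b : ℝ) - a)) - 2) := by
  rcases le_or_gt b a with hab | hab
  · rw [Ioo_eq_empty hab.not_gt, sum_empty]; norm_num
  obtain ⟨n, rfl⟩ := Nat.exists_eq_add_of_lt hab
  rw [sum_Ioo_eq_sum_range]
  have hn : (0 : ℝ) < n + 1 := by positivity
  have hw : ∀ i : ℕ, (((a + 1 + i : ℕ) : ℝ) - a) / (((a + n + 1 : ℕ) : ℝ) - a)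
      = 1 / (n + 1) + 1 / (n + 1) * i := fun i => by
    push_cast
    rw [show (a : ℝ) + n + 1 - a = n + 1 by ring]
    field_simp
    ring
  simp only [hw, sum_range_affine_mul_three_mul_sub_two]
  rw [← sub_nonneg]
  field_simp
  ring_nf
  positivity

theorem neg_half_le_sum_Ioo_ramp_down (a b : ℕ) :
    -(1 / 2) ≤ ∑ t ∈ Ioo a b,
      ((b : ℝ) - t) / ((b : ℝ) - a) * (3 * (((b : ℝ) - t) / ((b : ℝ) - a)) - 2) := by
  rcases le_or_gt b a with hab | hab
  · rw [Ioo_eq_empty hab.not_gt, sum_empty]; norm_num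
  obtain ⟨n, rfl⟩ := Nat.exists_eq_add_of_lt hab
  rw [sum_Ioo_eq_sum_range]
  have hn : (0 : ℝ) < n + 1 := by positivity
  have hw : ∀ i : ℕ, (((a + n + 1 : ℕ) : ℝ) - ((a + 1 + i : ℕ) : ℝ)) / (((a + n + 1 : ℕ) : ℝ) - a)
      = n / (n + 1) + (-1 / (n + 1)) * i := fun i => by
    push_cast
    rw [show (a : ℝ) + n + 1 - a = n + 1 by ring]
    field_simp
    ring
  simp only [hw, sum_range_affine_mul_three_mul_sub_two]
  rw [← sub_nonneg]
  field_simp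
  ring_nf
  positivity

theorem exists_le_and_lt_succ {f : ℕ → ℕ} {t L : ℕ} (h0 : f 0 ≤ t) (hL : t < f L) :
    ∃ j < L, f j ≤ t ∧ t < f (j + 1) := by
  induction L with
  | zero => omega
  | succ L ih =>
    by_cases hfL : f L ≤ t
    · exact ⟨L, L.lt_succ_self, hfL, hL⟩
    · obtain ⟨j, hj, hj'⟩ := ih (not_le.mp hfL)
      exact ⟨j, hj.trans L.lt_succ_self, hj'⟩

namespace Matrix

variable {n : Type*} [Fintype n]

theorem sum_sum_mul_add_smul_sq {G : Matrix n n ℝ} (hG : G.IsSymm) (x : n → ℝ) (s : ℝ) :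
    ∑ i, ∑ j, G i j * (x i + s * x j) ^ 2
      = (1 + s ^ 2) * ∑ i, (∑ j, G i j) * x i ^ 2 + 2 * s * (x ⬝ᵥ (G *ᵥ x)) := by
  have hswap : ∑ i, ∑ j, G i j * x j ^ 2 = ∑ i, ∑ j, G i j * x i ^ 2 := by
    rw [sum_comm]
    exact sum_congr rfl fun i _ => sum_congr rfl fun j _ => by rw [hG.apply i j]
  have hexp : ∀ i j, G i j * (x i + s * x j) ^ 2
      = G i j * x i ^ 2 + s ^ 2 * (G i j * x j ^ 2) + 2 * s * (x i * (G i j * x j)) :=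
    fun i j => by ring
  simp only [hexp, sum_add_distrib, ← mul_sum, hswap, dotProduct, mulVec,
    ← sum_mul]
  ring

theorem dotProduct_mulVec_le_sum_rowSum_mul_sq {G : Matrix n n ℝ} (hG : G.IsSymm)
    (hG₀ : ∀ i j, 0 ≤ G i j) (x : n → ℝ) :
    x ⬝ᵥ (G *ᵥ x) ≤ ∑ i, (∑ j, G i j) * x i ^ 2 := by
  have h := sum_sum_mul_add_smul_sq hG x (-1)
  have : 0 ≤ ∑ i, ∑ j, G i j * (x i + -1 * x j) ^ 2 :=
    sum_nonneg fun i _ => sum_nonneg fun j _ => mul_nonneg (hG₀ i j) (sq_nonneg _)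
  linarith

theorem sum_two_mul_diag_sub_rowSum_mul_sq_le_dotProduct_mulVec {G : Matrix n n ℝ}
    (hG : G.IsSymm) (hG₀ : ∀ i j, 0 ≤ G i j) (x : n → ℝ) :
    ∑ i, (2 * G i i - ∑ j, G i j) * x i ^ 2 ≤ x ⬝ᵥ (G *ᵥ x) := by
  have h := sum_sum_mul_add_smul_sq hG x 1
  have hdiag : ∑ i, G i i * (x i + 1 * x i) ^ 2 ≤ ∑ i, ∑ j, G i j * (x i + 1 * x j) ^ 2 :=
    sum_le_sum fun i _ =>
      single_le_sum (f := fun j => G i j * (x i + 1 * x j) ^ 2)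
        (fun j _ => mul_nonneg (hG₀ i j) (sq_nonneg _)) (mem_univ i)
  have hdiag_eq : ∑ i, G i i * (x i + 1 * x i) ^ 2 = 4 * ∑ i, G i i * x i ^ 2 := by
    rw [mul_sum]
    exact sum_congr rfl fun i _ => by ring
  simp only [sub_mul, sum_sub_distrib, mul_assoc, ← mul_sum] at h ⊢
  linarith

variable [DecidableEq n]

theorem algebraMap_mem_spectrum_map_iff {K L : Type*} [Field K] [Field L] [Algebra K L]
    (A : Matrix n n K) (r : K) :
    algebraMap K L r ∈ spectrum L (A.map (algebraMap K L)) ↔ r ∈ spectrum K A := by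
  rw [mem_spectrum_iff_isRoot_charpoly, mem_spectrum_iff_isRoot_charpoly, charpoly_map,
    Polynomial.IsRoot.def, Polynomial.IsRoot.def, Polynomial.eval_map, Polynomial.eval₂_at_apply,
    map_eq_zero_iff _ (algebraMap K L).injective]

theorem exists_mulVec_eq_smul_of_mem_spectrum {K : Type*} [Field K] {A : Matrix n n K} {r : K}
    (h : r ∈ spectrum K A) : ∃ v ≠ 0, A *ᵥ v = r • v := by
  rw [← spectrum_toLin', ← Module.End.hasEigenvalue_iff_mem_spectrum] at h
  obtain ⟨v, hv⟩ := h.exists_hasEigenvector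
  exact ⟨v, hv.2, by simpa using hv.apply_eq_smul⟩

theorem re_mem_spectrum_of_mem_spectrum_map {A : Matrix n n ℝ} {z : ℂ}
    (hz : z ∈ spectrum ℂ (A.map (algebraMap ℝ ℂ))) (him : z.im = 0) : z.re ∈ spectrum ℝ A := by
  rw [← algebraMap_mem_spectrum_map_iff (L := ℂ)]
  convert hz
  exact Complex.ext rfl him.symm

variable {d : n → ℝ} {G : Matrix n n ℝ}

theorem mem_Icc_of_mem_spectrum_diagonal_inv_mul (hd : ∀ i, 0 < d i) {c C : ℝ}
    (hc : ∀ x, c * ∑ i, d i * x i ^ 2 ≤ x ⬝ᵥ (G *ᵥ x))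
    (hC : ∀ x, x ⬝ᵥ (G *ᵥ x) ≤ C * ∑ i, d i * x i ^ 2) {r : ℝ}
    (hr : r ∈ spectrum ℝ (diagonal (fun i => (d i)⁻¹) * G)) : r ∈ Set.Icc c C := by
  obtain ⟨v, hv, hGv⟩ := exists_mulVec_eq_smul_of_mem_spectrum hr
  have hGv_apply : ∀ i, (G *ᵥ v) i = r * (d i * v i) := fun i => by
    have := congrFun hGv i
    rw [← mulVec_mulVec, mulVec_diagonal, Pi.smul_apply, smul_eq_mul] at this
    field_simp [(hd i).ne'] at this
    linarith
  have hquad : v ⬝ᵥ (G *ᵥ v) = r * ∑ i, d i * v i ^ 2 := by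
    simp only [dotProduct, hGv_apply, mul_sum]
    exact sum_congr rfl fun i _ => by ring
  obtain ⟨i₀, hi₀⟩ := Function.ne_iff.mp hv
  replace hi₀ : v i₀ ≠ 0 := hi₀
  have hpos : 0 < ∑ i, d i * v i ^ 2 :=
    sum_pos' (fun i _ => mul_nonneg (hd i).le (sq_nonneg _))
      ⟨i₀, mem_univ _, mul_pos (hd i₀) (by positivity)⟩
  exact ⟨le_of_mul_le_mul_right (hquad ▸ hc v) hpos, le_of_mul_le_mul_right (hquad ▸ hC v) hpos⟩

theorem im_eq_zero_of_mem_spectrum_map_diagonal_inv_mul (hd : ∀ i, 0 < d i) (hG : G.IsSymm)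
    {z : ℂ} (hz : z ∈ spectrum ℂ ((diagonal (fun i => (d i)⁻¹) * G).map (algebraMap ℝ ℂ))) :
    z.im = 0 := by
  have hsqrt : ∀ i, Real.sqrt (d i) ≠ 0 := fun i => (Real.sqrt_pos.mpr (hd i)).ne'
  let u : (Matrix n n ℝ)ˣ :=
    { val := diagonal fun i => (Real.sqrt (d i))⁻¹
      inv := diagonal fun i => Real.sqrt (d i)
      val_inv := by simp [diagonal_mul_diagonal, hsqrt]
      inv_val := by simp [diagonal_mul_diagonal, hsqrt] }
  let S : Matrix n n ℝ := u * G * u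
  have hconj : diagonal (fun i => (d i)⁻¹) * G = u * S * u⁻¹ := by
    have huu : (u * u : Matrix n n ℝ) = diagonal fun i => (d i)⁻¹ := by
      simp [u, diagonal_mul_diagonal, ← mul_inv, Real.mul_self_sqrt (hd _).le]
    simp only [S, Matrix.mul_assoc, Units.mul_inv, Matrix.mul_one]
    rw [← Matrix.mul_assoc, huu]
  have hS : (S.map (algebraMap ℝ ℂ)).IsHermitian := by
    refine IsHermitian.map ?_ _ fun x => (Complex.conj_ofReal x).symm
    rw [isHermitian_iff_isSymm]
    simp [S, IsSymm, transpose_mul, hG.eq, u, Matrix.mul_assoc]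
  let uℂ := Units.map (RingHom.mapMatrix (algebraMap ℝ ℂ)).toMonoidHom u
  have hz' : z ∈ spectrum ℂ (uℂ * S.map (algebraMap ℝ ℂ) * uℂ⁻¹) := by
    rwa [hconj, ← RingHom.mapMatrix_apply, map_mul, map_mul] at hz
  rw [spectrum.units_conjugate, hS.spectrum_eq_image_range] at hz'
  obtain ⟨_, -, rfl⟩ := hz'
  simp

theorem mem_spectrum_map_diagonal_inv_mul (hd : ∀ i, 0 < d i) (hG : G.IsSymm) {c C : ℝ}
    (hc : ∀ x, c * ∑ i, d i * x i ^ 2 ≤ x ⬝ᵥ (G *ᵥ x))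
    (hC : ∀ x, x ⬝ᵥ (G *ᵥ x) ≤ C * ∑ i, d i * x i ^ 2) {z : ℂ}
    (hz : z ∈ spectrum ℂ ((diagonal (fun i => (d i)⁻¹) * G).map (algebraMap ℝ ℂ))) :
    z.im = 0 ∧ z.re ∈ Set.Icc c C := by
  have him := im_eq_zero_of_mem_spectrum_map_diagonal_inv_mul hd hG hz
  exact ⟨him, mem_Icc_of_mem_spectrum_diagonal_inv_mul hd hc hC
    (re_mem_spectrum_of_mem_spectrum_map hz him)⟩

theorem spectrum_diagonal_inv_mul_nonempty [Nonempty n] (hd : ∀ i, 0 < d i) (hG : G.IsSymm) :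
    (spectrum ℝ (diagonal (fun i => (d i)⁻¹) * G)).Nonempty := by
  obtain ⟨z, hz⟩ := spectrum.nonempty_of_isAlgClosed_of_finiteDimensional ℂ
    ((diagonal (fun i => (d i)⁻¹) * G).map (algebraMap ℝ ℂ))
  exact ⟨z.re, re_mem_spectrum_of_mem_spectrum_map hz
    (im_eq_zero_of_mem_spectrum_map_diagonal_inv_mul hd hG hz)⟩

end Matrix

section

variable {m : ℕ} {α : Finset (Fin (m - 2))}

theorem freeIdx_lt {j : ℕ} (hj : j < #(freeSet m α)) : freeIdx m α j < m := by
  rw [freeIdx, dif_pos hj]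
  exact Fin.isLt _

theorem freeIdx_mem {j : ℕ} (hj : j < #(freeSet m α)) :
    (⟨freeIdx m α j, freeIdx_lt hj⟩ : Fin m) ∈ freeSet m α := by
  simp only [freeIdx, dif_pos hj, Fin.eta]
  exact Subtype.prop _

theorem freeIdx_card : freeIdx m α #(freeSet m α) = m := by
  rw [freeIdx, dif_neg (lt_irrefl _)]

theorem freeIdx_lt_freeIdx {j k : ℕ} (hjk : j < k) (hk : k ≤ #(freeSet m α)) :
    freeIdx m α j < freeIdx m α k := by
  rcases hk.eq_or_lt with rfl | hk
  · rw [freeIdx_card]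
    exact freeIdx_lt hjk
  · rw [freeIdx, dif_pos (hjk.trans hk), freeIdx, dif_pos hk]
    exact ((freeSet m α).orderIsoOfFin rfl).strictMono (show (⟨j, _⟩ : Fin _) < ⟨k, hk⟩ from hjk)

theorem freeIdx_mono : Monotone (freeIdx m α) := by
  intro j k hjk
  rcases hjk.eq_or_lt with rfl | hjk
  · rfl
  by_cases hk : k ≤ #(freeSet m α)
  · exact (freeIdx_lt_freeIdx hjk hk).le
  · have hk' : freeIdx m α k = m := by rw [freeIdx, dif_neg (by omega)]
    rw [hk']
    by_cases hj : j < #(freeSet m α)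
    · exact (freeIdx_lt hj).le
    · rw [freeIdx, dif_neg hj]

theorem exists_freeIdx_eq {t : Fin m} (ht : t ∈ freeSet m α) :
    ∃ j < #(freeSet m α), freeIdx m α j = t := by
  obtain ⟨j, hj⟩ := ((freeSet m α).orderIsoOfFin rfl).surjective ⟨t, ht⟩
  exact ⟨j, j.isLt, by simp [freeIdx, hj]⟩

theorem freeIdx_zero (hm : 0 < m) : freeIdx m α 0 = 0 := by
  obtain ⟨j, -, hj⟩ := exists_freeIdx_eq (α := α) (t := ⟨0, hm⟩) (by simp [freeSet])
  have := freeIdx_mono (α := α) j.zero_le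
  simp_all

theorem freeIdx_card_sub_one (hm : 0 < m) : freeIdx m α (#(freeSet m α) - 1) = m - 1 := by
  obtain ⟨j, hj, hjt⟩ := exists_freeIdx_eq (α := α) (t := ⟨m - 1, by omega⟩) (by
    simp only [freeSet, mem_filter, mem_univ, true_and]
    intro i _
    omega)
  have := freeIdx_mono (α := α) (show j ≤ #(freeSet m α) - 1 by omega)
  have := freeIdx_lt (α := α) (show #(freeSet m α) - 1 < #(freeSet m α) by omega)
  simp only at hjt
  omega

theorem Fmat_nonneg (j : Fin #(freeSet m α)) (t : Fin m) : 0 ≤ Fmat m α j t := by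
  unfold Fmat
  split_ifs with h₁ h₂ h₃
  · exact zero_le_one
  · exact div_nonneg (by linarith [(Nat.cast_lt (α := ℝ)).mpr h₂.2]) (by
      linarith [(Nat.cast_lt (α := ℝ)).mpr h₂.1, (Nat.cast_lt (α := ℝ)).mpr h₂.2])
  · exact div_nonneg (by linarith [(Nat.cast_lt (α := ℝ)).mpr h₃.2.1]) (by
      linarith [(Nat.cast_lt (α := ℝ)).mpr h₃.2.1, (Nat.cast_lt (α := ℝ)).mpr h₃.2.2])
  · exact le_rfl

theorem Fmat_apply_freeIdx (k j : Fin #(freeSet m α)) :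
    Fmat m α k ⟨freeIdx m α j, freeIdx_lt j.isLt⟩ = if k = j then 1 else 0 := by
  obtain ⟨k, hk⟩ := k
  obtain ⟨j, hj⟩ := j
  rcases lt_trichotomy k j with hkj | rfl | hkj
  · have := freeIdx_mono (α := α) (show k + 1 ≤ j by omega)
    have := freeIdx_lt_freeIdx (α := α) hkj hj.le
    simp only [Fmat, Fin.mk.injEq, hkj.ne, if_false]
    split_ifs <;> first | rfl | omega
  · simp [Fmat]
  · have := freeIdx_mono (α := α) (show j ≤ k - 1 by omega)
    have := freeIdx_lt_freeIdx (α := α) hkj hk.le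
    simp only [Fmat, Fin.mk.injEq, hkj.ne', if_false]
    split_ifs <;> first | rfl | omega

theorem Fmat_apply_of_between {j : ℕ} (hj : j + 1 < #(freeSet m α)) {t : Fin m}
    (h₁ : freeIdx m α j < t) (h₂ : t < freeIdx m α (j + 1)) (k : Fin #(freeSet m α)) :
    Fmat m α k t =
      (if k.val = j then
        ((freeIdx m α (j + 1) : ℝ) - t) / ((freeIdx m α (j + 1) : ℝ) - freeIdx m α j) else 0) +
      (if k.val = j + 1 then
        ((t : ℝ) - freeIdx m α j) / ((freeIdx m α (j + 1) : ℝ) - freeIdx m α j) else 0) := by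
  obtain ⟨k, hk⟩ := k
  dsimp only [Fmat]
  rcases (by omega : k < j ∨ k = j ∨ k = j + 1 ∨ j + 1 < k) with hkj | rfl | rfl | hkj
  · have := freeIdx_mono (α := α) (show k + 1 ≤ j by omega)
    have := freeIdx_mono (α := α) (show k ≤ j by omega)
    simp only [show k ≠ j by omega, show k ≠ j + 1 by omega, if_false, add_zero]
    split_ifs <;> first | rfl | omega
  · simp [h₁, h₂, h₁.ne']
  · simp [h₁, h₂, h₂.ne, h₂.not_gt]
  · have := freeIdx_mono (α := α) (show j + 1 ≤ k - 1 by omega)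
    have := freeIdx_mono (α := α) (show j + 1 ≤ k by omega)
    simp only [show k ≠ j by omega, show k ≠ j + 1 by omega, if_false, add_zero]
    split_ifs <;> first | rfl | omega

theorem sum_Fmat_col (hm : 0 < m) (t : Fin m) : ∑ k, Fmat m α k t = 1 := by
  by_cases ht : t ∈ freeSet m α
  · obtain ⟨j, hj, hjt⟩ := exists_freeIdx_eq ht
    obtain rfl : t = ⟨freeIdx m α j, freeIdx_lt hj⟩ := Fin.ext hjt.symm
    simp [Fmat_apply_freeIdx _ ⟨j, hj⟩]
  have ht' : (t : ℕ) < m - 1 := by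
    simp only [freeSet, mem_filter, mem_univ, true_and, not_forall, not_not] at ht
    obtain ⟨i, -, hi⟩ := ht
    omega
  obtain ⟨j, hj, hle, hlt⟩ := exists_le_and_lt_succ (f := freeIdx m α) (t := t)
    (L := #(freeSet m α) - 1) (by rw [freeIdx_zero hm]; omega)
    (by rw [freeIdx_card_sub_one hm]; exact ht')
  have h₁ : freeIdx m α j < t := by
    refine hle.lt_of_ne fun h => ht ?_
    convert freeIdx_mem (α := α) (show j < #(freeSet m α) by omega)
    exact h.symm
  have hgap : ((freeIdx m α (j + 1) : ℝ) - freeIdx m α j) ≠ 0 :=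
    sub_ne_zero.mpr (Nat.cast_injective.ne (freeIdx_lt_freeIdx j.lt_succ_self (by omega)).ne')
  simp only [Fmat_apply_of_between (by omega) h₁ hlt, sum_add_distrib]
  rw [Fin.sum_univ_eq_sum_range (fun k => if k = j then _ else 0),
    Fin.sum_univ_eq_sum_range (fun k => if k = j + 1 then _ else 0),
    sum_ite_eq' _ _ (fun _ => _), sum_ite_eq' _ _ (fun _ => _), if_pos (mem_range.mpr (by omega)),
    if_pos (mem_range.mpr (by omega))]
  field_simp
  ring

theorem sum_Fmat_row_mul_three_mul_sub_two_nonneg (j : Fin #(freeSet m α)) :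
    0 ≤ ∑ t, Fmat m α j t * (3 * Fmat m α j t - 2) := by
  obtain ⟨j, hj⟩ := j
  set a := freeIdx m α (j - 1) with ha
  set c := freeIdx m α j with hc
  set b := freeIdx m α (j + 1) with hb
  have hac : a ≤ c := freeIdx_mono (j.sub_le 1)
  have hcb : c < b := freeIdx_lt_freeIdx j.lt_succ_self hj
  have hbm : b ≤ m := by
    rcases (show j + 1 < #(freeSet m α) ∨ j + 1 = #(freeSet m α) by omega) with h | h
    · exact (freeIdx_lt h).le
    · simp only [b, h, freeIdx_card, le_rfl]
  -- for `j = 0` the truncated `j - 1` makes `a = c`, so the left ramp is empty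
  have hj0 : 0 < j ∨ a = c := by
    rcases Nat.eq_zero_or_pos j with rfl | h
    · exact Or.inr rfl
    · exact Or.inl h
  have hrow : ∀ t : Fin m, Fmat m α ⟨j, hj⟩ t * (3 * Fmat m α ⟨j, hj⟩ t - 2) =
      (if (t : ℕ) = c then 1 else 0) +
      (if (t : ℕ) ∈ Ioo c b then
        ((b : ℝ) - t) / ((b : ℝ) - c) * (3 * (((b : ℝ) - t) / ((b : ℝ) - c)) - 2) else 0) +
      (if (t : ℕ) ∈ Ioo a c then
        ((t : ℝ) - a) / ((c : ℝ) - a) * (3 * (((t : ℝ) - a) / ((c : ℝ) - a)) - 2) else 0) := by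
    intro t
    simp only [Fmat, mem_Ioo, ← ha, ← hb, ← hc]
    split_ifs <;> first | omega | norm_num
  simp only [hrow, sum_add_distrib]
  rw [Fin.sum_univ_eq_sum_range (fun t => if t = c then (1 : ℝ) else 0),
    Fin.sum_univ_eq_sum_range (fun t : ℕ => if t ∈ Ioo c b then
        ((b : ℝ) - t) / ((b : ℝ) - c) * (3 * (((b : ℝ) - t) / ((b : ℝ) - c)) - 2) else 0),
    Fin.sum_univ_eq_sum_range (fun t : ℕ => if t ∈ Ioo a c then
        ((t : ℝ) - a) / ((c : ℝ) - a) * (3 * (((t : ℝ) - a) / ((c : ℝ) - a)) - 2) else 0),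
    sum_ite_eq', if_pos (mem_range.mpr (by omega)), sum_ite_mem, sum_ite_mem,
    inter_eq_right.mpr (fun t ht => mem_range.mpr (by simp at ht; omega)),
    inter_eq_right.mpr (fun t ht => mem_range.mpr (by simp at ht; omega))]
  linarith [neg_half_le_sum_Ioo_ramp_down c b, neg_half_le_sum_Ioo_ramp_up a c]

theorem Fmat_mul_transpose_isSymm : (Fmat m α * (Fmat m α)ᵀ).IsSymm := by
  simp [IsSymm, transpose_mul]

theorem Fmat_mul_transpose_nonneg (j k : Fin #(freeSet m α)) :
    0 ≤ (Fmat m α * (Fmat m α)ᵀ) j k := by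
  rw [mul_apply]
  exact sum_nonneg fun t _ => mul_nonneg (Fmat_nonneg j t) (Fmat_nonneg k t)

theorem sum_Fmat_mul_transpose_row (hm : 0 < m) (j : Fin #(freeSet m α)) :
    ∑ k, (Fmat m α * (Fmat m α)ᵀ) j k = etaRow m α j := by
  simp only [mul_apply, transpose_apply]
  rw [sum_comm]
  simp [etaRow, ← mul_sum, sum_Fmat_col hm]

theorem two_mul_etaRow_le_three_mul_Fmat_mul_transpose_diag (j : Fin #(freeSet m α)) :
    2 * etaRow m α j ≤ 3 * (Fmat m α * (Fmat m α)ᵀ) j j := by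
  have h : 3 * (Fmat m α * (Fmat m α)ᵀ) j j - 2 * etaRow m α j
      = ∑ t, Fmat m α j t * (3 * Fmat m α j t - 2) := by
    simp only [etaRow, mul_apply, transpose_apply, mul_sum, ← sum_sub_distrib]
    exact sum_congr rfl fun t _ => by ring
  linarith [sum_Fmat_row_mul_three_mul_sub_two_nonneg j]

theorem etaRow_pos (j : Fin #(freeSet m α)) : 0 < etaRow m α j := by
  have hdiag : Fmat m α j ⟨freeIdx m α j, freeIdx_lt j.isLt⟩ = 1 := by
    simp [Fmat_apply_freeIdx]
  calc (0 : ℝ) < 1 := one_pos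
    _ = Fmat m α j ⟨freeIdx m α j, freeIdx_lt j.isLt⟩ := hdiag.symm
    _ ≤ etaRow m α j := single_le_sum (fun t _ => Fmat_nonneg j t) (mem_univ _)

theorem dotProduct_Fmat_mul_transpose_mulVec_le (hm : 0 < m) (x : Fin #(freeSet m α) → ℝ) :
    x ⬝ᵥ ((Fmat m α * (Fmat m α)ᵀ) *ᵥ x) ≤ 1 * ∑ j, etaRow m α j * x j ^ 2 := by
  simpa [sum_Fmat_mul_transpose_row hm] using
    dotProduct_mulVec_le_sum_rowSum_mul_sq Fmat_mul_transpose_isSymm Fmat_mul_transpose_nonneg x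

theorem le_dotProduct_Fmat_mul_transpose_mulVec (hm : 0 < m) (x : Fin #(freeSet m α) → ℝ) :
    1 / 3 * ∑ j, etaRow m α j * x j ^ 2 ≤ x ⬝ᵥ ((Fmat m α * (Fmat m α)ᵀ) *ᵥ x) := by
  refine le_trans ?_ (sum_two_mul_diag_sub_rowSum_mul_sq_le_dotProduct_mulVec
    Fmat_mul_transpose_isSymm Fmat_mul_transpose_nonneg x)
  rw [mul_sum]
  refine sum_le_sum fun j _ => ?_
  rw [sum_Fmat_mul_transpose_row hm, ← mul_assoc]
  have := two_mul_etaRow_le_three_mul_Fmat_mul_transpose_diag j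
  exact mul_le_mul_of_nonneg_right (by linarith) (sq_nonneg _)

end

/-- Proposition 6.2.  For every `K_n`, spline degree `p` and index set `α`,
all eigenvalues of `Ξ_α F_α F_αᵀ` are positive reals and
`1/3 ≤ λ_min(Ξ_α F_α F_αᵀ) ≤ λ_max(Ξ_α F_α F_αᵀ) ≤ 1`. -/
theorem stmt5 (K p : ℕ) (hK : 0 < K) (α : Finset (Fin (K + p - 2))) :
    (∀ μ ∈ spectrum ℂ
        ((XiMat (K + p) α * Fmat (K + p) α * (Fmat (K + p) α)ᵀ).map (algebraMap ℝ ℂ)),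
        μ.im = 0 ∧ 0 < μ.re) ∧
    1 / 3 ≤ sInf (spectrum ℝ (XiMat (K + p) α * Fmat (K + p) α * (Fmat (K + p) α)ᵀ)) ∧
    sInf (spectrum ℝ (XiMat (K + p) α * Fmat (K + p) α * (Fmat (K + p) α)ᵀ)) ≤
      sSup (spectrum ℝ (XiMat (K + p) α * Fmat (K + p) α * (Fmat (K + p) α)ᵀ)) ∧
    sSup (spectrum ℝ (XiMat (K + p) α * Fmat (K + p) α * (Fmat (K + p) α)ᵀ)) ≤ 1 := by
  have hm : 0 < K + p := by omega
  have : Nonempty (Fin #(freeSet (K + p) α)) :=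
    ⟨⟨0, card_pos.mpr ⟨⟨0, hm⟩, by simp [freeSet]⟩⟩⟩
  rw [XiMat, Matrix.mul_assoc]
  have hd := etaRow_pos (α := α)
  have hG := Fmat_mul_transpose_isSymm (α := α)
  have hlow := le_dotProduct_Fmat_mul_transpose_mulVec (α := α) hm
  have hup := dotProduct_Fmat_mul_transpose_mulVec_le (α := α) hm
  have hreal := fun r hr => mem_Icc_of_mem_spectrum_diagonal_inv_mul hd hlow hup (r := r) hr
  have hne := spectrum_diagonal_inv_mul_nonempty hd hG
  refine ⟨fun z hz => ?_, le_csInf hne fun r hr => (hreal r hr).1,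
    csInf_le_csSup hne (bddBelow_Icc.mono hreal) (bddAbove_Icc.mono hreal),
    csSup_le hne fun r hr => (hreal r hr).2⟩
  obtain ⟨hz_im, hz_re⟩ := mem_spectrum_map_diagonal_inv_mul hd hG hlow hup hz
  exact ⟨hz_im, by linarith [hz_re.1]⟩
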